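/- Let A = T_n⟨S; T⟩ be a walk-ensured Toeplitz matrix with d⁺ = gcd{s+t : s∈S, t∈T} ≤ n. Then there exists M such that for all ℓ ≥ M and all x, y ∈ {1,…,n}: there exists z ∈ {1,…,n} with directed walks of length ℓ from x to z and from y to z in D(A), if and only if x ≡ y (mod d⁺). In particular, the ℓ-step competition graph of D(A) is eventually constant, equal to the graph whose adjacency matrix is the symmetric Toeplitz matrix T_n⟨d⁺, 2d⁺, …, ⌊n/d⁺⌋d⁺⟩. -/

import Mathlib

/-- gcd of all sums `s + t` with `s ∈ S`, `t ∈ T`. -/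
def sumGcd (S T : Finset ℕ) : ℕ := (S ×ˢ T).gcd (fun p => p.1 + p.2)

/-- gcd of all elements of `S ∪ T`. -/
def unionGcd (S T : Finset ℕ) : ℕ := (S ∪ T).gcd id

/-- Arc of the Toeplitz digraph `D(T_n⟨S;T⟩)` on vertex set `{1,…,n}`. -/
def arc (n : ℕ) (S T : Finset ℕ) (u v : ℕ) : Prop :=
  u ∈ Finset.Icc 1 n ∧ v ∈ Finset.Icc 1 n ∧
    ((∃ s ∈ S, (v : ℤ) - u = s) ∨ (∃ t ∈ T, (u : ℤ) - v = t))

/-- There is a directed walk of length `m` from `u` to `v` in `D(T_n⟨S;T⟩)`. -/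
def hasWalk (n : ℕ) (S T : Finset ℕ) (u v m : ℕ) : Prop :=
  ∃ f : ℕ → ℕ, f 0 = u ∧ f m = v ∧ ∀ i < m, arc n S T (f i) (f (i + 1))

/-- `ℓ ∈ P_i(A)` for `A = T_n⟨S;T⟩`, where `dplus = gcd(S+T)` and `s1 = min S`. -/
def Pset (n dplus s1 : ℕ) (i : ℕ) (ℓ : ℤ) : Prop :=
  -(n : ℤ) < ℓ ∧ ℓ < n ∧ ℓ ≡ (i : ℤ) * s1 [ZMOD (dplus : ℤ)]

/-- `ℓ ∈ Q_i(A)` for `A = T_n⟨S;T⟩`. -/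
def Qset (n : ℕ) (S T : Finset ℕ) (i : ℕ) (ℓ : ℤ) : Prop :=
  -(n : ℤ) < ℓ ∧ ℓ < n ∧ ∃ a b : ℕ → ℕ,
    ((∑ s ∈ S, (a s : ℤ) * s) - ∑ t ∈ T, (b t : ℤ) * t) = ℓ ∧
    ((∑ s ∈ S, a s) + ∑ t ∈ T, b t) = i

/-- `ℓ ∈ R_i(A)` for `A = T_n⟨S;T⟩`. -/
def Rset (n : ℕ) (S T : Finset ℕ) (i : ℕ) (ℓ : ℤ) : Prop :=
  -(n : ℤ) < ℓ ∧ ℓ < n ∧ ∀ u ∈ Finset.Icc 1 n, ∀ v ∈ Finset.Icc 1 n,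
    (v : ℤ) - u = ℓ → hasWalk n S T u v i

/-- `T_n⟨S;T⟩` is walk-ensured (with `s1 = min S`). -/
def walkEnsured (n : ℕ) (S T : Finset ℕ) (s1 : ℕ) : Prop :=
  ∃ M : ℕ, 0 < M ∧ ∀ u ∈ Finset.Icc 1 n, ∀ v ∈ Finset.Icc 1 n, ∀ ℓ : ℕ, M ≤ ℓ →
    ((v : ℤ) - u ≡ (ℓ : ℤ) * s1 [ZMOD ((sumGcd S T : ℕ) : ℤ)]) → hasWalk n S T u v ℓ

/-!
Every arc of `D(A)` moves a vertex by `min S` modulo `d⁺`, so the endpoints of walks of length `ℓ`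
from `x` and from `y` can only coincide when `x ≡ y (mod d⁺)`. Conversely, walk-ensuredness gives,
for large `ℓ`, walks of length `ℓ` from both `x` and `y` to any vertex `z ≡ x + ℓ·min S`, and such a
`z` exists in `[1, d⁺] ⊆ [1, n]`.
-/

section ToeplitzDigraph

variable {n : ℕ} {S T : Finset ℕ} {s t : ℕ}

theorem sumGcd_dvd_add (hs : s ∈ S) (ht : t ∈ T) : sumGcd S T ∣ s + t :=
  Finset.gcd_dvd (f := fun p : ℕ × ℕ => p.1 + p.2) (b := (s, t))
    (Finset.mem_product.mpr ⟨hs, ht⟩)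

theorem sumGcd_pos (hs : s ∈ S) (ht : t ∈ T) (hs0 : 0 < s) : 0 < sumGcd S T :=
  Nat.pos_of_dvd_of_pos (sumGcd_dvd_add hs ht) (by omega)

/-- An arc moves by some `s' ∈ S` or by `-t'` with `t' ∈ T`, and both
`s' - s = (s' + t) - (s + t)` and `-t' - s = -(s + t')` are multiples of `d⁺`. -/
theorem arc_sub_modEq (hs : s ∈ S) (ht : t ∈ T) {u v : ℕ} (h : arc n S T u v) :
    (v : ℤ) - u ≡ s [ZMOD sumGcd S T] := by
  have hdvd : ∀ {s' t'}, s' ∈ S → t' ∈ T → ((sumGcd S T : ℕ) : ℤ) ∣ (s' : ℤ) + t' :=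
    fun hs' ht' => by exact_mod_cast sumGcd_dvd_add hs' ht'
  rw [Int.modEq_comm, Int.modEq_iff_dvd]
  rcases h.2.2 with ⟨s', hs', hv⟩ | ⟨t', ht', hu⟩
  · rw [hv, show (s' : ℤ) - s = (s' + t) - (s + t) by ring]
    exact dvd_sub (hdvd hs' ht) (hdvd hs ht)
  · rw [show (v : ℤ) - u - s = -(s + t') by omega]
    exact (hdvd hs ht').neg_right

theorem hasWalk.sub_modEq (hs : s ∈ S) (ht : t ∈ T) {u v m : ℕ} (h : hasWalk n S T u v m) :
    (v : ℤ) - u ≡ m * s [ZMOD sumGcd S T] := by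
  obtain ⟨f, rfl, rfl, harc⟩ := h
  induction m with
  | zero => simp
  | succ m ih =>
    have hstep := (ih fun i hi => harc i (by omega)).add
      (arc_sub_modEq hs ht (harc m m.lt_succ_self))
    convert hstep using 1 <;> push_cast <;> ring

end ToeplitzDigraph

theorem exists_mem_Icc_intModEq {d n : ℕ} (hd : 0 < d) (hdn : d ≤ n) (c : ℤ) :
    ∃ z ∈ Finset.Icc 1 n, (z : ℤ) ≡ c [ZMOD d] := by
  have hr0 : 0 ≤ (c - 1) % d := Int.emod_nonneg _ (by omega)
  have hrd : (c - 1) % d < d := Int.emod_lt_of_pos _ (by omega)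
  refine ⟨((c - 1) % d).toNat + 1, Finset.mem_Icc.mpr ⟨by omega, by omega⟩, ?_⟩
  have hz : ((((c - 1) % d).toNat + 1 : ℕ) : ℤ) = (c - 1) % d + 1 := by push_cast; omega
  simpa [hz] using (Int.mod_modEq (c - 1) d).add_right 1

theorem stmt15_general (n : ℕ) (S T : Finset ℕ) (hS : S.Nonempty) (hT : T.Nonempty)
    (hSsub : S ⊆ Finset.Icc 1 (n - 1))
    (hwe : walkEnsured n S T (S.min' hS))
    (hdplus : sumGcd S T ≤ n) :
    ∃ M : ℕ, ∀ ℓ : ℕ, M ≤ ℓ → ∀ x ∈ Finset.Icc 1 n, ∀ y ∈ Finset.Icc 1 n,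
      ((∃ z ∈ Finset.Icc 1 n, hasWalk n S T x z ℓ ∧ hasWalk n S T y z ℓ) ↔
        x ≡ y [MOD sumGcd S T]) := by
  obtain ⟨M, -, hwalk⟩ := hwe
  obtain ⟨t, ht⟩ := hT
  have hs := S.min'_mem hS
  have hd : 0 < sumGcd S T := sumGcd_pos hs ht (Finset.mem_Icc.mp (hSsub hs)).1
  refine ⟨M, fun ℓ hℓ x hx y hy => ?_⟩
  rw [← Int.natCast_modEq_iff]
  constructor
  · rintro ⟨z, -, hxz, hyz⟩
    have hzxy := (hxz.sub_modEq hs ht).trans (hyz.sub_modEq hs ht).symm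
    simpa using hzxy.sub_left z
  · intro hxy
    obtain ⟨z, hz, hzx⟩ := exists_mem_Icc_intModEq hd hdplus (x + ℓ * S.min' hS)
    have hzx' : (z : ℤ) - x ≡ ℓ * S.min' hS [ZMOD sumGcd S T] := by
      simpa using hzx.sub_right x
    exact ⟨z, hz, hwalk x hx z hz ℓ hℓ hzx',
      hwalk y hy z hz ℓ hℓ ((hxy.sub_left z).symm.trans hzx')⟩

theorem stmt15 (n : ℕ) (S T : Finset ℕ) (hS : S.Nonempty) (hT : T.Nonempty)
    (hSsub : S ⊆ Finset.Icc 1 (n - 1)) (hTsub : T ⊆ Finset.Icc 1 (n - 1))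
    (hwe : walkEnsured n S T (S.min' hS))
    (hdplus : sumGcd S T ≤ n) :
    ∃ M : ℕ, ∀ ℓ : ℕ, M ≤ ℓ → ∀ x ∈ Finset.Icc 1 n, ∀ y ∈ Finset.Icc 1 n,
      ((∃ z ∈ Finset.Icc 1 n, hasWalk n S T x z ℓ ∧ hasWalk n S T y z ℓ) ↔
        x ≡ y [MOD sumGcd S T]) :=
  stmt15_general n S T hS hT hSsub hwe hdplus
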